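/- For n = 2 and λ ∈ Λ(2,r), the algebra S_ℤ(λ) = 1_λ S_ℤ(2,r) 1_λ has ℤ-basis {1_λ f^{(a)} e^{(a)} 1_λ : 0 ≤ a ≤ min(λ_1, λ_2)} and also ℤ-basis {1_λ e^{(a)} f^{(a)} 1_λ : 0 ≤ a ≤ min(λ_1, λ_2)}; in particular dim S(λ) = 1 + min(λ_1, λ_2), and S(λ) is a commutative algebra generated by the single element 1_λ f e 1_λ. -/

import Mathlib

/-!
STATEMENT 16: For `n = 2` and `λ ∈ Λ(2,r)`, the algebra `S_ℤ(λ) = 1_λ S_ℤ(2,r) 1_λ` has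
`ℤ`-basis `{1_λ f^{(a)} e^{(a)} 1_λ : 0 ≤ a ≤ min(λ_1, λ_2)}` and also `ℤ`-basis
`{1_λ e^{(a)} f^{(a)} 1_λ : 0 ≤ a ≤ min(λ_1, λ_2)}`; in particular
`dim S(λ) = 1 + min(λ_1, λ_2)`, and `S(λ)` is a commutative algebra generated by the
single element `1_λ f e 1_λ`.

Here `e = e_{12}`, `f = e_{21}` act on `E^{⊗r}` (`E = ℚ²`) via the derived action,
`S_ℤ(2,r)` is the image of Kostant's `ℤ`-form (generated by divided powers and binomials)
in `End_ℚ(E^{⊗r})`, and `S_ℚ(λ)` is modelled as `1_λ End_{Σ_r}(E^{⊗r}) 1_λ`.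
-/

open scoped BigOperators

namespace SchurPaper

variable (r : ℕ)

abbrev TSpQ := (Fin r → Fin 2) → ℚ

def wt (i : Fin r → Fin 2) : Fin 2 → ℕ :=
  fun j => (Finset.univ.filter fun k => i k = j).card

lemma wt_comp (i : Fin r → Fin 2) (σ : Equiv.Perm (Fin r)) :
    wt r (i ∘ σ) = wt r i := by
  funext j
  exact Finset.card_equiv σ (fun k => by simp [Function.comp])

def placePerm (σ : Equiv.Perm (Fin r)) : TSpQ r →ₗ[ℚ] TSpQ r :=
  LinearMap.funLeft ℚ ℚ fun i => i ∘ σ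

def proj (lam : Fin 2 → ℕ) : TSpQ r →ₗ[ℚ] TSpQ r where
  toFun f := fun i => if wt r i = lam then f i else 0
  map_add' f g := by funext i; by_cases h : wt r i = lam <;> simp [h]
  map_smul' c f := by funext i; by_cases h : wt r i = lam <;> simp [h]

/-- `S_ℚ(λ) = 1_λ End_{Σ_r}(E^{⊗r}) 1_λ`. -/
def heckeBimodule (lam mu : Fin 2 → ℕ) : Submodule ℚ (Module.End ℚ (TSpQ r)) where
  carrier := {x | (∀ σ, x ∘ₗ placePerm r σ = placePerm r σ ∘ₗ x) ∧
      proj r lam ∘ₗ x ∘ₗ proj r mu = x}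
  add_mem' := by
    rintro x y ⟨hx1, hx2⟩ ⟨hy1, hy2⟩
    refine ⟨fun σ => ?_, ?_⟩
    · rw [LinearMap.add_comp, LinearMap.comp_add, hx1 σ, hy1 σ]
    · conv_lhs => rw [LinearMap.add_comp, LinearMap.comp_add]
      rw [hx2, hy2]
  zero_mem' := ⟨fun σ => by simp, by simp⟩
  smul_mem' := by
    rintro c x ⟨hx1, hx2⟩
    refine ⟨fun σ => ?_, ?_⟩
    · rw [LinearMap.smul_comp, LinearMap.comp_smul, hx1 σ]
    · conv_lhs => rw [LinearMap.smul_comp, LinearMap.comp_smul]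
      rw [hx2]

noncomputable def dAct (X : Matrix (Fin 2) (Fin 2) ℚ) : Module.End ℚ (TSpQ r) :=
  Matrix.toLin' (Matrix.of fun i j : Fin r → Fin 2 =>
    ∑ k, if ∀ l, l ≠ k → i l = j l then X (i k) (j k) else 0)

noncomputable def divPow (x : Module.End ℚ (TSpQ r)) (a : ℕ) : Module.End ℚ (TSpQ r) :=
  ((a.factorial : ℚ)⁻¹) • x ^ a

noncomputable def binomOp (y : Module.End ℚ (TSpQ r)) (b : ℕ) : Module.End ℚ (TSpQ r) :=
  ((b.factorial : ℚ)⁻¹) • ((List.range b).map fun t => y - (t : ℚ) • 1).prod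

/-- `e = e_{12}` acting on tensor space. -/
noncomputable def Eop : Module.End ℚ (TSpQ r) := dAct r (Matrix.single 0 1 1)

/-- `f = e_{21}` acting on tensor space. -/
noncomputable def Fop : Module.End ℚ (TSpQ r) := dAct r (Matrix.single 1 0 1)

/-- Kostant `ℤ`-form generators for `gl_2`. -/
noncomputable def kostantGens : Set (Module.End ℚ (TSpQ r)) :=
  {x | (∃ a : ℕ, x = divPow r (Eop r) a ∨ x = divPow r (Fop r) a) ∨
       (∃ (i : Fin 2) (b : ℕ), x = binomOp r (dAct r (Matrix.single i i 1)) b)}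

noncomputable def SZ : Subalgebra ℤ (Module.End ℚ (TSpQ r)) :=
  Algebra.adjoin ℤ (kostantGens r)

/-- `S_ℤ(λ) = 1_λ S_ℤ(2,r) 1_λ`. -/
noncomputable def heckeLat (lam : Fin 2 → ℕ) : Submodule ℤ (Module.End ℚ (TSpQ r)) :=
  Submodule.map
    ((LinearMap.mulLeft ℤ (proj r lam)).comp (LinearMap.mulRight ℤ (proj r lam)))
    (Subalgebra.toSubmodule (SZ r))

/-!
Index the basis of `E^{⊗r}` by `i : Fin r → Fin 2` and encode `i` by the set `ones i` of
positions carrying the second basis vector. An endomorphism commuting with the place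
permutations has a matrix that is constant on the `Σ_r`-orbits of pairs `(i, j)`; for pairs of
weight `λ` these orbits are classified by `d = #(ones j \ ones i) ≤ min(λ₁, λ₂)`, so the
orbit indicators `ξ_d` form a `ℚ`-basis of `S(λ)` and a `ℤ`-basis of its integral part.

The `(i, j)` entry of `1_λ f^{(a)} e^{(a)} 1_λ` counts the sets `K ⊆ ones i ∩ ones j` with
`a` elements fewer than `ones i`: there is exactly one when `d = a` and none when `d > a`. So
this family is unitriangular with respect to `ξ` (dually `e^{(a)} f^{(a)}`, with
`K ⊇ ones i ∪ ones j`), which gives both `ℤ`-bases and the dimension. Swapping `i` and `j`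
preserves the orbit, so every matrix in `S(λ)` is symmetric and `S(λ)` is commutative. Finally
`ξ₁ ξ_d` has a nonzero coefficient on `ξ_{d+1}` and none beyond, so the powers of
`1_λ f e 1_λ = ξ₁ + c ξ₀` reach every `ξ_d`.
-/

open Finset Submodule
open scoped Matrix

variable {r}

section Triangular

variable {ι R M : Type*} [Ring R] [AddCommGroup M] [Module R M]

lemma exists_basis_of_span_eq {v : ι → M} {N : Submodule R M} (hli : LinearIndependent R v)
    (h : span R (Set.range v) = N) : ∃ b : Module.Basis ι R N, ∀ i, (b i : M) = v i :=
  ⟨(Module.Basis.span hli).map (LinearEquiv.ofEq _ _ h),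
    fun i => by simp [Module.Basis.span_apply]⟩

variable [LinearOrder ι]

lemma span_range_eq_of_sub_mem_span_Iio [WellFoundedLT ι] {v w : ι → M}
    (h : ∀ a, v a - w a ∈ span R (w '' Set.Iio a)) :
    span R (Set.range v) = span R (Set.range w) := by
  refine le_antisymm (span_le.2 ?_) (span_le.2 ?_)
  · rintro _ ⟨a, rfl⟩
    rw [← sub_add_cancel (v a) (w a)]
    exact add_mem (span_mono (Set.image_subset_range _ _) (h a)) (subset_span ⟨a, rfl⟩)
  · rintro _ ⟨a, rfl⟩
    induction a using WellFoundedLT.induction with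
    | ind a ih =>
      rw [← sub_sub_cancel (v a) (w a)]
      refine sub_mem (subset_span ⟨a, rfl⟩) (span_le.2 ?_ (h a))
      rintro _ ⟨e, he, rfl⟩
      exact ih e he

lemma sum_smul_sub_smul_mem_span_Iio [Fintype ι] (w : ι → M) (c : ι → R) {a : ι}
    (hc : ∀ e, a < e → c e = 0) :
    ∑ e, c e • w e - c a • w a ∈ span R (w '' Set.Iio a) := by
  rw [← add_sum_erase _ _ (mem_univ a), add_sub_cancel_left]
  refine Submodule.sum_mem _ fun e he => ?_
  rcases lt_or_gt_of_ne (ne_of_mem_erase he) with hlt | hgt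
  · exact smul_mem _ _ (subset_span ⟨e, hlt, rfl⟩)
  · rw [hc e hgt, zero_smul]
    exact zero_mem _

end Triangular

open scoped Pointwise in
lemma mul_mem_span_idempotent_pow {R A : Type*} [CommRing R] [Ring A] [Algebra R A] {e g : A}
    (he : e * e = e) (heg : e * g = g) (hge : g * e = g) {x y : A}
    (hx : x ∈ span R ({e} ∪ Set.range fun k : ℕ => g ^ (k + 1)))
    (hy : y ∈ span R ({e} ∪ Set.range fun k : ℕ => g ^ (k + 1))) :
    x * y ∈ span R ({e} ∪ Set.range fun k : ℕ => g ^ (k + 1)) := by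
  have hxy := mul_mem_mul hx hy
  rw [span_mul_span] at hxy
  refine span_mono ?_ hxy
  rintro _ ⟨u, hu, v, hv, rfl⟩
  rcases hu with rfl | ⟨a, rfl⟩ <;> rcases hv with rfl | ⟨b, rfl⟩ <;> beta_reduce
  · exact Or.inl he
  · rw [pow_succ', ← mul_assoc, heg, ← pow_succ']
    exact Or.inr ⟨b, rfl⟩
  · rw [pow_succ, mul_assoc, hge, ← pow_succ]
    exact Or.inr ⟨a, rfl⟩
  · rw [← pow_add]
    exact Or.inr ⟨a + b + 1, by ring_nf⟩

lemma list_prod_map_range_cast {M : Type*} [CommMonoid M] (f : ℚ → M) (b : ℕ) :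
    (List.map f (do let a ← List.range b; pure (a : ℚ))).prod = ∏ t ∈ range b, f t := by
  rw [prod_eq_multiset_prod, range_val, Multiset.range, Multiset.map_coe, Multiset.prod_coe]
  simp only [List.pure_def, List.bind_eq_flatMap, ← List.map_eq_flatMap, List.map_map]
  rfl

section FinsetCounting

variable {α : Type*} [DecidableEq α] {I J K : Finset α} {a : ℕ}

lemma card_sdiff_comm_of_card_eq (h : #I = #J) : #(I \ J) = #(J \ I) := by
  have h1 := card_sdiff_add_card_inter I J
  have h2 := card_sdiff_add_card_inter J I
  rw [inter_comm] at h2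
  omega

lemma card_sdiff_add_card_sdiff (hIK : I ⊆ K)
    (hKJ : K ⊆ J) : #(J \ K) + #(K \ I) = #(J \ I) := by
  rw [card_sdiff_of_subset hIK, card_sdiff_of_subset hKJ, card_sdiff_of_subset (hIK.trans hKJ)]
  have := card_le_card hIK
  have := card_le_card hKJ
  omega

lemma card_sdiff_le_card_sdiff_add (I K J : Finset α) :
    #(J \ I) ≤ #(J \ K) + #(K \ I) :=
  (card_le_card (sdiff_triangle J K I)).trans (card_union_le _ _)

lemma subset_both_iff_eq_inter (hIJ : #I = #J) (ha : a ≤ #(J \ I)) :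
    ((K ⊆ I ∧ #(I \ K) = a) ∧ K ⊆ J ∧ #(J \ K) = a) ↔ #(J \ I) = a ∧ K = I ∩ J := by
  have hsymm := card_sdiff_comm_of_card_eq hIJ
  have hinter := card_sdiff_add_card_inter I J
  constructor
  · rintro ⟨⟨hKI, hIK⟩, hKJ, -⟩
    have hK := card_le_card (subset_inter hKI hKJ)
    rw [card_sdiff_of_subset hKI] at hIK
    have := card_le_card hKI
    have hd : #(J \ I) = a := by omega
    exact ⟨hd, eq_of_subset_of_card_le (subset_inter hKI hKJ) (by omega)⟩
  · rintro ⟨hd, rfl⟩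
    refine ⟨⟨inter_subset_left, ?_⟩, inter_subset_right, ?_⟩
    · rw [sdiff_inter_self_left, hsymm, hd]
    · rw [sdiff_inter_self_right, hd]

lemma superset_both_iff_eq_union (hIJ : #I = #J) (ha : a ≤ #(J \ I)) :
    ((I ⊆ K ∧ #(K \ I) = a) ∧ J ⊆ K ∧ #(K \ J) = a) ↔ #(J \ I) = a ∧ K = I ∪ J := by
  have hsymm := card_sdiff_comm_of_card_eq hIJ
  have hunion := card_sdiff_add_card J I
  rw [union_comm] at hunion
  constructor
  · rintro ⟨⟨hIK, hKI⟩, hJK, -⟩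
    have hK := card_le_card (union_subset hIK hJK)
    rw [card_sdiff_of_subset hIK] at hKI
    have := card_le_card hIK
    have hd : #(J \ I) = a := by omega
    exact ⟨hd, (eq_of_subset_of_card_le (union_subset hIK hJK) (by omega)).symm⟩
  · rintro ⟨hd, rfl⟩
    refine ⟨⟨subset_union_left, ?_⟩, subset_union_right, ?_⟩
    · rw [union_sdiff_left, hd]
    · rw [union_sdiff_right, hsymm, hd]

lemma exists_card_sdiff_eq_one (hIJ : #I = #J) {d : ℕ} (hd : #(J \ I) = d + 1) :
    ∃ K, #K = #I ∧ #(K \ I) = 1 ∧ #(J \ K) = d := by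
  obtain ⟨x, hx⟩ := card_pos.1 (by omega : 0 < #(J \ I))
  obtain ⟨y, hy⟩ := card_pos.1 (by rw [card_sdiff_comm_of_card_eq hIJ]; omega : 0 < #(I \ J))
  rw [mem_sdiff] at hx hy
  have hxy : x ∉ I.erase y := fun h => hx.2 (mem_of_mem_erase h)
  refine ⟨insert x (I.erase y), ?_, ?_, ?_⟩
  · rw [card_insert_of_notMem hxy, card_erase_of_mem hy.1]
    have := card_pos.2 ⟨y, hy.1⟩
    omega
  · rw [card_eq_one]
    refine ⟨x, ext fun l => ?_⟩
    simp only [mem_sdiff, mem_insert, mem_erase, mem_singleton]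
    constructor
    · rintro ⟨h1 | ⟨-, h1⟩, h2⟩
      · exact h1
      · exact absurd h1 h2
    · rintro rfl
      exact ⟨Or.inl rfl, hx.2⟩
  · have : J \ insert x (I.erase y) = (J \ I).erase x := by
      ext l
      simp only [mem_sdiff, mem_insert, mem_erase, not_or, not_and]
      constructor
      · rintro ⟨h1, h2, h3⟩
        exact ⟨h2, h1, fun h => h3 (fun hly => hy.2 (hly ▸ h1)) h⟩
      · rintro ⟨h1, h2, h3⟩
        exact ⟨h2, h1, fun _ h => h3 h⟩
    rw [this, card_erase_of_mem (mem_sdiff.2 hx), hd, Nat.add_sub_cancel]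

variable [Fintype α]

lemma card_filter_subset_subset (h : I ⊆ J) (t : ℕ) :
    #{K | I ⊆ K ∧ K ⊆ J ∧ #(K \ I) = t} = (#(J \ I)).choose t := by
  rw [← card_powersetCard]
  refine card_nbij' (· \ I) (I ∪ ·) (fun K hK => ?_) (fun T hT => ?_) (fun K hK => ?_)
    (fun T hT => ?_)
  · simp only [mem_coe, mem_filter, mem_univ, true_and, mem_powersetCard] at hK ⊢
    exact ⟨sdiff_subset_sdiff hK.2.1 le_rfl, hK.2.2⟩
  · simp only [mem_coe, mem_filter, mem_univ, true_and, mem_powersetCard] at hT ⊢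
    have hdisj : Disjoint I T := disjoint_of_subset_right hT.1 disjoint_sdiff
    exact ⟨subset_union_left, union_subset h (hT.1.trans sdiff_subset),
      by rw [union_sdiff_cancel_left hdisj, hT.2]⟩
  · simp only [mem_coe, mem_filter, mem_univ, true_and] at hK
    exact union_sdiff_of_subset hK.1
  · simp only [mem_coe, mem_powersetCard] at hT
    exact union_sdiff_cancel_left (disjoint_of_subset_right hT.1 disjoint_sdiff)

lemma card_filter_covBy_subset (I J : Finset α) (a : ℕ) :
    #{K | (I ⊆ K ∧ #(K \ I) = 1) ∧ K ⊆ J ∧ #(J \ K) = a}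
      = if I ⊆ J ∧ #(J \ I) = a + 1 then a + 1 else 0 := by
  split_ifs with h
  · rw [← Nat.choose_one_right (a + 1), ← h.2, ← card_filter_subset_subset h.1 1]
    refine congrArg card (filter_congr fun K _ =>
      ⟨fun ⟨⟨h1, h2⟩, h3, _⟩ => ⟨h1, h3, h2⟩,
        fun ⟨h1, h3, h2⟩ => ⟨⟨h1, h2⟩, h3, ?_⟩⟩)
    have := card_sdiff_add_card_sdiff h1 h3
    omega
  · refine card_eq_zero.2 (filter_eq_empty_iff.2 fun K _ ⟨⟨h1, h2⟩, h3, h4⟩ =>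
      h ⟨h1.trans h3, ?_⟩)
    have := card_sdiff_add_card_sdiff h1 h3
    omega

lemma sum_ite_eq_singleton (S : Finset α) :
    ∑ k, (if S = {k} then (1 : ℚ) else 0) = if #S = 1 then 1 else 0 := by
  split_ifs with h
  · obtain ⟨k₀, rfl⟩ := card_eq_one.1 h
    simp [singleton_inj]
  · exact sum_eq_zero fun k _ => if_neg fun hk => h (by rw [hk, card_singleton])

end FinsetCounting

def ones : (Fin r → Fin 2) ≃ Finset (Fin r) where
  toFun i := {l | i l = 1}
  invFun S l := if l ∈ S then 1 else 0
  left_inv i := by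
    funext l
    simp only [mem_filter, mem_univ, true_and]
    split_ifs with h
    · exact h.symm
    · omega
  right_inv S := by
    ext l
    simp

@[simp] lemma mem_ones {i : Fin r → Fin 2} {l : Fin r} : l ∈ ones i ↔ i l = 1 := by
  simp [ones]

lemma card_ones (i : Fin r → Fin 2) : #(ones i) = wt r i 1 := rfl

lemma wt_zero_add_wt_one (i : Fin r → Fin 2) : wt r i 0 + wt r i 1 = r := by
  have h := card_filter_add_card_filter_not (s := (univ : Finset (Fin r))) (fun l => i l = 0)
  rw [card_univ, Fintype.card_fin] at h
  have h1 : wt r i 1 = #{l | ¬i l = 0} := congrArg card (filter_congr fun l _ => by omega)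
  rw [h1]
  exact h

lemma wt_eq_iff {lam : Fin 2 → ℕ} (hlam : lam 0 + lam 1 = r) {i : Fin r → Fin 2} :
    wt r i = lam ↔ #(ones i) = lam 1 := by
  refine ⟨fun h => by rw [card_ones, h], fun h => funext fun u => ?_⟩
  have := wt_zero_add_wt_one i
  rw [card_ones] at h
  fin_cases u
  · simp only [Fin.zero_eta]
    omega
  · simp only [Fin.mk_one]
    omega

lemma card_sdiff_ones (i j : Fin r → Fin 2) :
    #(ones j \ ones i) = #{l | i l = 0 ∧ j l = 1} := by
  congr 1
  ext l
  simp only [mem_sdiff, mem_ones, mem_filter, mem_univ, true_and]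
  omega

lemma card_filter_add_card_filter_eq_wt_left (i j : Fin r → Fin 2) (u : Fin 2) :
    #{l | i l = u ∧ j l = 0} + #{l | i l = u ∧ j l = 1} = wt r i u := by
  rw [wt, ← card_filter_add_card_filter_not (s := {l | i l = u}) (fun l => j l = 0),
    filter_filter, filter_filter]
  congr 2
  ext l
  simp only [mem_filter, mem_univ, true_and]
  omega

lemma card_filter_add_card_filter_eq_wt_right (i j : Fin r → Fin 2) (v : Fin 2) :
    #{l | i l = 0 ∧ j l = v} + #{l | i l = 1 ∧ j l = v} = wt r j v := by
  simpa only [and_comm] using card_filter_add_card_filter_eq_wt_left j i v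

lemma exists_perm_of_card_sdiff_eq {i j i' j' : Fin r → Fin 2} (hi : wt r i = wt r i')
    (hj : wt r j = wt r j') (hd : #(ones j \ ones i) = #(ones j' \ ones i')) :
    ∃ σ : Equiv.Perm (Fin r), i ∘ σ = i' ∧ j ∘ σ = j' := by
  -- the fibres of `l ↦ (i l, j l)` form a 2 × 2 table whose row and column sums are the
  -- weights of `i` and `j` and whose `(0, 1)` entry is `#(ones j \ ones i)`
  have hcard : ∀ c : Fin 2 × Fin 2, Fintype.card {l // (i' l, j' l) = c}
      = Fintype.card {l // (i l, j l) = c} := by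
    rintro ⟨u, v⟩
    simp only [Fintype.card_subtype, Prod.mk.injEq]
    have h0 := card_filter_add_card_filter_eq_wt_left i j 0
    have h1 := card_filter_add_card_filter_eq_wt_left i j 1
    have h0' := card_filter_add_card_filter_eq_wt_left i' j' 0
    have h1' := card_filter_add_card_filter_eq_wt_left i' j' 1
    have h2 := card_filter_add_card_filter_eq_wt_right i j 1
    have h2' := card_filter_add_card_filter_eq_wt_right i' j' 1
    rw [card_sdiff_ones, card_sdiff_ones] at hd
    rw [hi] at h0 h1
    rw [hj] at h2
    fin_cases u <;> fin_cases v <;> simp only [Fin.zero_eta, Fin.mk_one] <;> omega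
  let e := fun c => Fintype.equivOfCardEq (hcard c)
  have key (l : Fin r) : (i (Equiv.ofFiberEquiv e l), j (Equiv.ofFiberEquiv e l)) = (i' l, j' l) :=
    Equiv.ofFiberEquiv_map e l
  exact ⟨Equiv.ofFiberEquiv e, funext fun l => congrArg Prod.fst (key l),
    funext fun l => congrArg Prod.snd (key l)⟩

lemma card_sdiff_ones_le {lam : Fin 2 → ℕ} {i j : Fin r → Fin 2} (hi : wt r i = lam)
    (hj : wt r j = lam) : #(ones j \ ones i) ≤ min (lam 0) (lam 1) := by
  have h0 := card_filter_add_card_filter_eq_wt_left i j 0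
  have h1 := card_filter_add_card_filter_eq_wt_right i j 1
  rw [hi] at h0
  rw [hj] at h1
  rw [card_sdiff_ones]
  omega

noncomputable abbrev mat :
    Module.End ℚ (TSpQ r) ≃ₐ[ℚ] Matrix (Fin r → Fin 2) (Fin r → Fin 2) ℚ :=
  LinearMap.toMatrixAlgEquiv'

lemma mat_apply (x : Module.End ℚ (TSpQ r)) (i j : Fin r → Fin 2) :
    mat x i j = x (Pi.single j 1) i :=
  LinearMap.toMatrixAlgEquiv'_apply x i j

lemma mat_placePerm_mul (σ : Equiv.Perm (Fin r)) (x : Module.End ℚ (TSpQ r))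
    (i j : Fin r → Fin 2) : mat (placePerm r σ * x) i j = mat x (i ∘ σ) j := by
  simp only [mat_apply, Module.End.mul_apply, placePerm, LinearMap.funLeft_apply]

lemma mat_mul_placePerm (σ : Equiv.Perm (Fin r)) (x : Module.End ℚ (TSpQ r))
    (i j : Fin r → Fin 2) : mat (x * placePerm r σ) i j = mat x i (j ∘ σ.symm) := by
  have : placePerm r σ (Pi.single j 1) = Pi.single (j ∘ σ.symm) 1 := by
    funext k
    simp only [placePerm, LinearMap.funLeft_apply, Pi.single_apply]
    congr 1
    exact propext ⟨fun h => by simp [← h, Function.comp_assoc],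
      fun h => by simp [h, Function.comp_assoc]⟩
  rw [mat_apply, mat_apply, Module.End.mul_apply, this]

/-- `S_ℚ(2,r) = End_{Σ_r}(E^{⊗r})`. -/
def schurAlgebra (r : ℕ) : Subalgebra ℚ (Module.End ℚ (TSpQ r)) :=
  Subalgebra.centralizer ℚ (Set.range (placePerm r))

lemma mem_schurAlgebra_iff {x : Module.End ℚ (TSpQ r)} :
    x ∈ schurAlgebra r ↔
      ∀ (σ : Equiv.Perm (Fin r)) i j, mat x (i ∘ σ) (j ∘ σ) = mat x i j := by
  simp only [schurAlgebra, Subalgebra.mem_centralizer_iff, Set.forall_mem_range]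
  refine forall_congr' fun σ => ⟨fun h i j => ?_, fun h => mat.injective ?_⟩
  · have := congrArg (fun y => mat y i (j ∘ σ)) h
    simp only [mat_placePerm_mul, mat_mul_placePerm] at this
    rwa [Function.comp_assoc, Equiv.self_comp_symm, Function.comp_id] at this
  · ext i j
    rw [mat_placePerm_mul, mat_mul_placePerm, ← h i (j ∘ σ.symm), Function.comp_assoc,
      Equiv.symm_comp_self, Function.comp_id]

lemma mat_eq_of_card_sdiff_eq {x : Module.End ℚ (TSpQ r)} (hx : x ∈ schurAlgebra r)
    {i j i' j' : Fin r → Fin 2} (hi : wt r i = wt r i') (hj : wt r j = wt r j')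
    (hd : #(ones j \ ones i) = #(ones j' \ ones i')) : mat x i j = mat x i' j' := by
  obtain ⟨σ, rfl, rfl⟩ := exists_perm_of_card_sdiff_eq hi hj hd
  exact (mem_schurAlgebra_iff.1 hx σ i j).symm

lemma mat_dAct (X : Matrix (Fin 2) (Fin 2) ℚ) (i j : Fin r → Fin 2) :
    mat (dAct r X) i j = ∑ k, if ∀ l, l ≠ k → i l = j l then X (i k) (j k) else 0 :=
  congrFun (congrFun (LinearMap.toMatrix'_toLin' _) i) j

lemma dAct_mem_schurAlgebra (X : Matrix (Fin 2) (Fin 2) ℚ) : dAct r X ∈ schurAlgebra r := by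
  refine mem_schurAlgebra_iff.2 fun σ i j => ?_
  rw [mat_dAct, mat_dAct,
    ← Equiv.sum_comp σ fun k => if ∀ l, l ≠ k → i l = j l then X (i k) (j k) else 0]
  refine sum_congr rfl fun k _ => if_congr ?_ rfl rfl
  exact σ.forall_congr fun l => by simp [σ.injective.ne_iff]

lemma divPow_mem {S : Subalgebra ℚ (Module.End ℚ (TSpQ r))} {x : Module.End ℚ (TSpQ r)}
    (hx : x ∈ S) (a : ℕ) : divPow r x a ∈ S :=
  S.smul_mem (pow_mem hx a) _

lemma binomOp_mem {S : Subalgebra ℚ (Module.End ℚ (TSpQ r))} {y : Module.End ℚ (TSpQ r)}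
    (hy : y ∈ S) (b : ℕ) : binomOp r y b ∈ S := by
  refine S.smul_mem (list_prod_mem fun z hz => ?_) _
  obtain ⟨t, -, rfl⟩ := List.mem_map.1 hz
  exact sub_mem hy (S.smul_mem (one_mem S) t)

lemma mat_proj (lam : Fin 2 → ℕ) :
    mat (proj r lam) = Matrix.diagonal fun i => if wt r i = lam then 1 else 0 := by
  ext i j
  rw [mat_apply, Matrix.diagonal_apply]
  by_cases hij : i = j <;> by_cases h : wt r i = lam <;> simp [proj, hij, h]

lemma proj_mem_schurAlgebra (lam : Fin 2 → ℕ) : proj r lam ∈ schurAlgebra r := by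
  refine mem_schurAlgebra_iff.2 fun σ i j => ?_
  simp only [mat_proj, Matrix.diagonal_apply, wt_comp,
    σ.surjective.injective_comp_right.eq_iff]

lemma SZ_le_schurAlgebra : SZ r ≤ (schurAlgebra r).restrictScalars ℤ := by
  refine Algebra.adjoin_le ?_
  rintro x (⟨a, rfl | rfl⟩ | ⟨u, b, rfl⟩)
  · exact divPow_mem (dAct_mem_schurAlgebra _) a
  · exact divPow_mem (dAct_mem_schurAlgebra _) a
  · exact binomOp_mem (dAct_mem_schurAlgebra _) b

noncomputable def integralEnd (r : ℕ) : Subalgebra ℤ (Module.End ℚ (TSpQ r)) :=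
  (((mat : Module.End ℚ (TSpQ r) ≃ₐ[ℚ] _).symm.toAlgHom.restrictScalars ℤ).comp
    (Algebra.ofId ℤ ℚ).mapMatrix).range

lemma mem_integralEnd_iff {x : Module.End ℚ (TSpQ r)} :
    x ∈ integralEnd r ↔ ∀ i j, ∃ n : ℤ, mat x i j = n := by
  refine ⟨?_, fun h => ?_⟩
  · rintro ⟨M, rfl⟩ i j
    exact ⟨M i j, by simp⟩
  · choose n hn using h
    exact ⟨Matrix.of n, mat.injective (by ext i j; simp [hn])⟩

def raise (a : ℕ) : Matrix (Fin r → Fin 2) (Fin r → Fin 2) ℚ :=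
  Matrix.of fun i j => if ones i ⊆ ones j ∧ #(ones j \ ones i) = a then 1 else 0

lemma raise_zero : (raise 0 : Matrix (Fin r → Fin 2) (Fin r → Fin 2) ℚ) = 1 := by
  ext i j
  refine if_congr ?_ rfl rfl
  rw [card_eq_zero, sdiff_eq_empty_iff_subset, ← subset_antisymm_iff, ones.apply_eq_iff_eq]

lemma ones_subset_and_sdiff_eq_singleton_iff {i j : Fin r → Fin 2} {k : Fin r} :
    ones i ⊆ ones j ∧ ones j \ ones i = {k} ↔
      (∀ l, l ≠ k → i l = j l) ∧ i k = 0 ∧ j k = 1 := by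
  constructor
  · rintro ⟨h1, h2⟩
    have hk : k ∈ ones j \ ones i := h2 ▸ mem_singleton_self k
    simp only [mem_sdiff, mem_ones] at hk
    refine ⟨fun l hl => ?_, by omega, hk.1⟩
    have h3 : l ∉ ones j \ ones i := by rw [h2]; simpa using hl
    have h4 := @h1 l
    simp only [mem_sdiff, mem_ones] at h3 h4
    omega
  · rintro ⟨h1, h2, h3⟩
    refine ⟨fun l hl => ?_, ext fun l => ?_⟩
    · rw [mem_ones] at hl ⊢
      by_cases hlk : l = k
      · subst hlk; omega
      · rwa [← h1 l hlk]
    · simp only [mem_sdiff, mem_ones, mem_singleton]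
      by_cases hlk : l = k
      · subst hlk; omega
      · have := h1 l hlk; omega

lemma mat_Eop : mat (Eop r) = raise 1 := by
  ext i j
  have hterm (k : Fin r) :
      (if ∀ l, l ≠ k → i l = j l then Matrix.single 0 1 1 (i k) (j k) else 0)
        = if ones i ⊆ ones j ∧ ones j \ ones i = {k} then (1 : ℚ) else 0 := by
    rw [Matrix.single_apply, ← ite_and]
    exact if_congr ((and_congr_right' (and_congr eq_comm eq_comm)).trans
      ones_subset_and_sdiff_eq_singleton_iff.symm) rfl rfl
  rw [Eop, mat_dAct, sum_congr rfl fun k _ => hterm k, raise, Matrix.of_apply]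
  by_cases h : ones i ⊆ ones j
  · simp only [h, true_and]
    exact sum_ite_eq_singleton _
  · simp [h]

lemma raise_one_mul_raise (a : ℕ) :
    raise 1 * raise a
      = ((a + 1 : ℕ) : ℚ) • (raise (a + 1) : Matrix (Fin r → Fin 2) _ ℚ) := by
  ext i j
  simp only [Matrix.mul_apply, raise, Matrix.of_apply, ite_zero_mul_ite_zero, mul_one,
    Matrix.smul_apply, smul_eq_mul]
  rw [ones.sum_comp fun K =>
      if (ones i ⊆ K ∧ #(K \ ones i) = 1) ∧ K ⊆ ones j ∧ #(ones j \ K) = a then (1 : ℚ)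
      else 0,
    sum_boole, card_filter_covBy_subset]
  split_ifs <;> simp

lemma mat_pow_Eop (a : ℕ) : mat (Eop r ^ a) = (a.factorial : ℚ) • raise a := by
  induction a with
  | zero => simp [raise_zero]
  | succ a ih =>
    rw [pow_succ', map_mul, ih, mat_Eop, mul_smul_comm, raise_one_mul_raise, smul_smul,
      Nat.factorial_succ]
    push_cast
    ring_nf

lemma mat_divPow_Eop (a : ℕ) : mat (divPow r (Eop r) a) = raise a := by
  rw [divPow, map_smul, mat_pow_Eop, smul_smul, inv_mul_cancel₀ (by positivity), one_smul]

lemma mat_dAct_transpose (X : Matrix (Fin 2) (Fin 2) ℚ) :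
    mat (dAct r Xᵀ) = (mat (dAct r X))ᵀ := by
  ext i j
  rw [Matrix.transpose_apply, mat_dAct, mat_dAct]
  exact sum_congr rfl fun k _ =>
    if_congr (forall_congr' fun l => imp_congr_right fun _ => eq_comm) rfl rfl

lemma mat_divPow_Fop (a : ℕ) : mat (divPow r (Fop r) a) = (raise a)ᵀ := by
  have hF : Fop r = dAct r (Matrix.single 0 1 1)ᵀ := by rw [Matrix.transpose_single]; rfl
  rw [← mat_divPow_Eop, divPow, divPow, map_smul, map_smul, map_pow, map_pow, hF,
    mat_dAct_transpose, Matrix.transpose_smul, Matrix.transpose_pow]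
  rfl

lemma mat_dAct_single_self (u : Fin 2) :
    mat (dAct r (Matrix.single u u 1)) = Matrix.diagonal fun j => (wt r j u : ℚ) := by
  ext i j
  rw [mat_dAct, Matrix.diagonal_apply]
  split_ifs with hij
  · subst hij
    simp [Matrix.single_apply, wt, sum_boole, eq_comm]
  · refine sum_eq_zero fun k _ => ?_
    split_ifs with h
    · rw [Matrix.single_apply, if_neg]
      rintro ⟨h1, h2⟩
      refine hij (funext fun l => ?_)
      by_cases hl : l = k
      · rw [hl, ← h1, ← h2]
      · exact h l hl
    · rfl

lemma mat_binomOp {y : Module.End ℚ (TSpQ r)} {d : (Fin r → Fin 2) → ℕ}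
    (hy : mat y = Matrix.diagonal fun j => (d j : ℚ)) (b : ℕ) :
    mat (binomOp r y b) = Matrix.diagonal fun j => ((d j).choose b : ℚ) := by
  have hfac (t : ℚ) :
      mat (y - t • 1) = Matrix.diagonalRingHom _ ℚ fun j => (d j : ℚ) - t := by
    rw [map_sub, map_smul, map_one, hy, ← Matrix.diagonal_one, ← Matrix.diagonal_smul,
      Matrix.diagonal_sub]
    simp
  rw [binomOp, map_smul, map_list_prod, List.map_map, Function.comp_def]
  simp only [hfac]
  rw [show (fun t => Matrix.diagonalRingHom _ ℚ fun j => (d j : ℚ) - t)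
      = Matrix.diagonalRingHom _ ℚ ∘ fun t j => (d j : ℚ) - t from rfl,
    ← List.map_map, ← map_list_prod, list_prod_map_range_cast, Matrix.diagonalRingHom_apply,
    ← Matrix.diagonal_smul]
  congr 1
  funext j
  rw [Pi.smul_apply, prod_apply, ← descPochhammer_eval_eq_prod_range,
    descPochhammer_eval_eq_descFactorial, Nat.descFactorial_eq_factorial_mul_choose]
  push_cast
  rw [smul_eq_mul, ← mul_assoc, inv_mul_cancel₀ (by positivity), one_mul]

lemma proj_mem_integralEnd (lam : Fin 2 → ℕ) : proj r lam ∈ integralEnd r := by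
  refine mem_integralEnd_iff.2 fun i j => ?_
  rw [mat_proj, Matrix.diagonal_apply]
  split_ifs
  exacts [⟨1, by simp⟩, ⟨0, by simp⟩, ⟨0, by simp⟩]

lemma SZ_le_integralEnd : SZ r ≤ integralEnd r := by
  refine Algebra.adjoin_le ?_
  rintro x (⟨a, rfl | rfl⟩ | ⟨u, b, rfl⟩) <;> refine mem_integralEnd_iff.2 fun i j => ?_
  · rw [mat_divPow_Eop, raise, Matrix.of_apply]
    split_ifs
    exacts [⟨1, by simp⟩, ⟨0, by simp⟩]
  · rw [mat_divPow_Fop, Matrix.transpose_apply, raise, Matrix.of_apply]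
    split_ifs
    exacts [⟨1, by simp⟩, ⟨0, by simp⟩]
  · rw [mat_binomOp (mat_dAct_single_self u), Matrix.diagonal_apply]
    split_ifs
    exacts [⟨(wt r i u).choose b, by simp⟩, ⟨0, by simp⟩]

lemma raise_transpose_mul_raise_apply {i j : Fin r → Fin 2} (hij : wt r i = wt r j) {a : ℕ}
    (ha : a ≤ #(ones j \ ones i)) :
    ((raise a)ᵀ * raise a : Matrix (Fin r → Fin 2) _ ℚ) i j
      = if #(ones j \ ones i) = a then 1 else 0 := by
  have hcard : #(ones i) = #(ones j) := by rw [card_ones, card_ones, hij]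
  simp only [Matrix.mul_apply, Matrix.transpose_apply, raise, Matrix.of_apply,
    ite_zero_mul_ite_zero, mul_one]
  rw [ones.sum_comp fun K =>
    if (K ⊆ ones i ∧ #(ones i \ K) = a) ∧ K ⊆ ones j ∧ #(ones j \ K) = a then (1 : ℚ)
    else 0]
  simp only [subset_both_iff_eq_inter hcard ha]
  split_ifs with h <;> simp [h]

lemma raise_mul_raise_transpose_apply {i j : Fin r → Fin 2} (hij : wt r i = wt r j) {a : ℕ}
    (ha : a ≤ #(ones j \ ones i)) :
    (raise a * (raise a)ᵀ : Matrix (Fin r → Fin 2) _ ℚ) i j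
      = if #(ones j \ ones i) = a then 1 else 0 := by
  have hcard : #(ones i) = #(ones j) := by rw [card_ones, card_ones, hij]
  simp only [Matrix.mul_apply, Matrix.transpose_apply, raise, Matrix.of_apply,
    ite_zero_mul_ite_zero, mul_one]
  rw [ones.sum_comp fun K =>
    if (ones i ⊆ K ∧ #(K \ ones i) = a) ∧ ones j ⊆ K ∧ #(K \ ones j) = a then (1 : ℚ)
    else 0]
  simp only [superset_both_iff_eq_union hcard ha]
  split_ifs with h <;> simp [h]

noncomputable def projFE (r : ℕ) (lam : Fin 2 → ℕ) (a : ℕ) : Module.End ℚ (TSpQ r) :=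
  proj r lam * (divPow r (Fop r) a * divPow r (Eop r) a) * proj r lam

noncomputable def projEF (r : ℕ) (lam : Fin 2 → ℕ) (a : ℕ) : Module.End ℚ (TSpQ r) :=
  proj r lam * (divPow r (Eop r) a * divPow r (Fop r) a) * proj r lam

section Corner

variable {lam : Fin 2 → ℕ}

lemma mem_heckeBimodule_iff {x : Module.End ℚ (TSpQ r)} :
    x ∈ heckeBimodule r lam lam ↔
      x ∈ schurAlgebra r ∧ proj r lam * (x * proj r lam) = x := by
  show _ ∧ _ ↔ _
  rw [schurAlgebra, Subalgebra.mem_centralizer_iff, Set.forall_mem_range]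
  exact and_congr_left' (forall_congr' fun σ => eq_comm)

lemma proj_mul_proj : proj r lam * proj r lam = proj r lam := by
  refine mat.injective ?_
  rw [map_mul, mat_proj, Matrix.diagonal_mul_diagonal]
  congr 1
  funext i
  split_ifs <;> simp

lemma proj_mul_of_mem {x : Module.End ℚ (TSpQ r)} (hx : x ∈ heckeBimodule r lam lam) :
    proj r lam * x = x := by
  rw [← (mem_heckeBimodule_iff.1 hx).2, ← mul_assoc, proj_mul_proj]

lemma mul_proj_of_mem {x : Module.End ℚ (TSpQ r)} (hx : x ∈ heckeBimodule r lam lam) :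
    x * proj r lam = x := by
  rw [← (mem_heckeBimodule_iff.1 hx).2, mul_assoc, mul_assoc, proj_mul_proj]

lemma mul_mem_heckeBimodule {x y : Module.End ℚ (TSpQ r)} (hx : x ∈ heckeBimodule r lam lam)
    (hy : y ∈ heckeBimodule r lam lam) : x * y ∈ heckeBimodule r lam lam :=
  mem_heckeBimodule_iff.2 ⟨mul_mem (mem_heckeBimodule_iff.1 hx).1 (mem_heckeBimodule_iff.1 hy).1,
    by rw [mul_assoc, mul_proj_of_mem hy, ← mul_assoc, proj_mul_of_mem hx]⟩

lemma proj_mem_heckeBimodule : proj r lam ∈ heckeBimodule r lam lam :=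
  mem_heckeBimodule_iff.2 ⟨proj_mem_schurAlgebra lam, by rw [proj_mul_proj, proj_mul_proj]⟩

lemma mat_proj_mul_mul_proj (x : Module.End ℚ (TSpQ r)) (i j : Fin r → Fin 2) :
    mat (proj r lam * x * proj r lam) i j
      = if wt r i = lam ∧ wt r j = lam then mat x i j else 0 := by
  rw [map_mul, map_mul, mat_proj, Matrix.mul_diagonal, Matrix.diagonal_mul]
  split_ifs <;> simp_all

lemma mat_eq_zero_of_mem {x : Module.End ℚ (TSpQ r)} (hx : x ∈ heckeBimodule r lam lam)
    {i j : Fin r → Fin 2} (h : ¬(wt r i = lam ∧ wt r j = lam)) : mat x i j = 0 := by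
  rw [← (mem_heckeBimodule_iff.1 hx).2, ← mul_assoc, mat_proj_mul_mul_proj, if_neg h]

lemma mat_transpose_of_mem {x : Module.End ℚ (TSpQ r)}
    (hx : x ∈ heckeBimodule r lam lam) : (mat x)ᵀ = mat x := by
  ext i j
  rw [Matrix.transpose_apply]
  by_cases h : wt r i = lam ∧ wt r j = lam
  · exact mat_eq_of_card_sdiff_eq (mem_heckeBimodule_iff.1 hx).1 (h.2.trans h.1.symm)
      (h.1.trans h.2.symm) (card_sdiff_comm_of_card_eq (by rw [card_ones, card_ones, h.1, h.2]))
  · rw [mat_eq_zero_of_mem hx h, mat_eq_zero_of_mem hx fun h' => h ⟨h'.2, h'.1⟩]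

lemma mul_comm_of_mem_heckeBimodule {x y : Module.End ℚ (TSpQ r)}
    (hx : x ∈ heckeBimodule r lam lam) (hy : y ∈ heckeBimodule r lam lam) : x * y = y * x := by
  refine mat.injective ?_
  rw [← mat_transpose_of_mem (mul_mem_heckeBimodule hx hy), map_mul, map_mul,
    Matrix.transpose_mul, mat_transpose_of_mem hx, mat_transpose_of_mem hy]

lemma mem_heckeLat_iff {y : Module.End ℚ (TSpQ r)} :
    y ∈ heckeLat r lam ↔ ∃ x ∈ SZ r, proj r lam * x * proj r lam = y := by
  simp [heckeLat, mul_assoc]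

lemma mem_heckeBimodule_of_mem_heckeLat {y : Module.End ℚ (TSpQ r)} (hy : y ∈ heckeLat r lam) :
    y ∈ heckeBimodule r lam lam := by
  obtain ⟨x, hx, rfl⟩ := mem_heckeLat_iff.1 hy
  refine mem_heckeBimodule_iff.2 ⟨mul_mem (mul_mem (proj_mem_schurAlgebra lam)
    (SZ_le_schurAlgebra hx)) (proj_mem_schurAlgebra lam), ?_⟩
  simp only [← mul_assoc, proj_mul_proj]
  rw [mul_assoc _ (proj r lam) (proj r lam), proj_mul_proj]

lemma mem_integralEnd_of_mem_heckeLat {y : Module.End ℚ (TSpQ r)} (hy : y ∈ heckeLat r lam) :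
    y ∈ integralEnd r := by
  obtain ⟨x, hx, rfl⟩ := mem_heckeLat_iff.1 hy
  exact mul_mem (mul_mem (proj_mem_integralEnd lam) (SZ_le_integralEnd hx))
    (proj_mem_integralEnd lam)

lemma projFE_zero : projFE r lam 0 = proj r lam := by
  simp [projFE, divPow, proj_mul_proj]

lemma projFE_one : projFE r lam 1 = proj r lam * (Fop r * Eop r) * proj r lam := by
  simp [projFE, divPow]

lemma projFE_mem_heckeLat (a : ℕ) : projFE r lam a ∈ heckeLat r lam :=
  mem_heckeLat_iff.2 ⟨_, mul_mem (Algebra.subset_adjoin (Or.inl ⟨a, Or.inr rfl⟩))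
    (Algebra.subset_adjoin (Or.inl ⟨a, Or.inl rfl⟩)), rfl⟩

lemma projFE_mem_heckeBimodule (a : ℕ) : projFE r lam a ∈ heckeBimodule r lam lam :=
  mem_heckeBimodule_of_mem_heckeLat (projFE_mem_heckeLat a)

lemma projEF_mem_heckeLat (a : ℕ) : projEF r lam a ∈ heckeLat r lam :=
  mem_heckeLat_iff.2 ⟨_, mul_mem (Algebra.subset_adjoin (Or.inl ⟨a, Or.inl rfl⟩))
    (Algebra.subset_adjoin (Or.inl ⟨a, Or.inr rfl⟩)), rfl⟩

lemma mat_projFE_apply {i j : Fin r → Fin 2} (hi : wt r i = lam) (hj : wt r j = lam) {a : ℕ}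
    (ha : a ≤ #(ones j \ ones i)) :
    mat (projFE r lam a) i j = if #(ones j \ ones i) = a then 1 else 0 := by
  rw [projFE, mat_proj_mul_mul_proj, if_pos ⟨hi, hj⟩, map_mul, mat_divPow_Fop, mat_divPow_Eop,
    raise_transpose_mul_raise_apply (hi.trans hj.symm) ha]

lemma mat_projEF_apply {i j : Fin r → Fin 2} (hi : wt r i = lam) (hj : wt r j = lam) {a : ℕ}
    (ha : a ≤ #(ones j \ ones i)) :
    mat (projEF r lam a) i j = if #(ones j \ ones i) = a then 1 else 0 := by
  rw [projEF, mat_proj_mul_mul_proj, if_pos ⟨hi, hj⟩, map_mul, mat_divPow_Fop, mat_divPow_Eop,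
    raise_mul_raise_transpose_apply (hi.trans hj.symm) ha]

end Corner

abbrev OrbitIdx (lam : Fin 2 → ℕ) := Fin (min (lam 0) (lam 1) + 1)

noncomputable def xi (r : ℕ) (lam : Fin 2 → ℕ) (d : ℕ) : Module.End ℚ (TSpQ r) :=
  mat.symm (Matrix.of fun i j =>
    if wt r i = lam ∧ wt r j = lam ∧ #(ones j \ ones i) = d then 1 else 0)

noncomputable abbrev orbitBasis (r : ℕ) (lam : Fin 2 → ℕ) (e : OrbitIdx lam) :
    Module.End ℚ (TSpQ r) :=
  xi r lam e

section OrbitBasis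

variable {lam : Fin 2 → ℕ}

lemma mat_xi_apply (d : ℕ) (i j : Fin r → Fin 2) :
    mat (xi r lam d) i j
      = if wt r i = lam ∧ wt r j = lam ∧ #(ones j \ ones i) = d then 1 else 0 := by
  rw [xi, AlgEquiv.apply_symm_apply, Matrix.of_apply]

lemma mat_sum_smul_xi_apply (c : OrbitIdx lam → ℚ) {i j : Fin r → Fin 2} (hi : wt r i = lam)
    (hj : wt r j = lam) :
    mat (∑ e, c e • xi r lam e) i j
      = c ⟨_, Nat.lt_succ_of_le (card_sdiff_ones_le hi hj)⟩ := by
  simp only [map_sum, map_smul, Matrix.sum_apply, Matrix.smul_apply, mat_xi_apply, hi, hj,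
    true_and, smul_eq_mul, mul_ite, mul_one, mul_zero]
  have h (x : OrbitIdx lam) : #(ones j \ ones i) = x
      ↔ ⟨_, Nat.lt_succ_of_le (card_sdiff_ones_le hi hj)⟩ = x := by rw [Fin.ext_iff]
  simp only [h, sum_ite_eq, mem_univ, if_true]

lemma mat_sum_smul_xi_apply_of_not (c : OrbitIdx lam → ℚ) {i j : Fin r → Fin 2}
    (h : ¬(wt r i = lam ∧ wt r j = lam)) : mat (∑ e, c e • xi r lam e) i j = 0 := by
  simp only [map_sum, map_smul, Matrix.sum_apply, Matrix.smul_apply, mat_xi_apply]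
  exact sum_eq_zero fun e _ => by rw [if_neg fun h' => h ⟨h'.1, h'.2.1⟩, smul_zero]

lemma mat_xi_one_mul_xi_eq_zero {d : ℕ} {i j : Fin r → Fin 2} (h : d + 1 < #(ones j \ ones i)) :
    mat (xi r lam 1 * xi r lam d) i j = 0 := by
  rw [map_mul, Matrix.mul_apply]
  refine sum_eq_zero fun k _ => ?_
  rw [mat_xi_apply, mat_xi_apply]
  split_ifs with h1 h2
  · have := card_sdiff_le_card_sdiff_add (ones i) (ones k) (ones j)
    omega
  all_goals simp

variable (hlam : lam 0 + lam 1 = r)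
include hlam

lemma exists_pair_card_sdiff_eq {d : ℕ} (hd : d ≤ min (lam 0) (lam 1)) :
    ∃ p : (Fin r → Fin 2) × (Fin r → Fin 2),
      wt r p.1 = lam ∧ wt r p.2 = lam ∧ #(ones p.2 \ ones p.1) = d := by
  have hd0 := hd.trans (min_le_left _ _)
  have hd1 := hd.trans (min_le_right _ _)
  obtain ⟨I, -, hI⟩ := exists_subset_card_eq (s := (univ : Finset (Fin r))) (n := lam 1)
    (by rw [card_univ, Fintype.card_fin]; omega)
  obtain ⟨D, hDI, hD⟩ := exists_subset_card_eq (s := I) (n := d) (by omega)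
  obtain ⟨U, hUI, hU⟩ := exists_subset_card_eq (s := Iᶜ) (n := d)
    (by rw [card_compl, Fintype.card_fin]; omega)
  have hdisj : Disjoint (I \ D) U :=
    disjoint_of_subset_left sdiff_subset (disjoint_of_subset_right hUI disjoint_compl_right)
  refine ⟨(ones.symm I, ones.symm (I \ D ∪ U)), ?_, ?_, ?_⟩
  · rw [wt_eq_iff hlam, Equiv.apply_symm_apply, hI]
  · rw [wt_eq_iff hlam, Equiv.apply_symm_apply, card_union_of_disjoint hdisj,
      card_sdiff_of_subset hDI]
    omega
  · have : (I \ D ∪ U) \ I = U := by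
      ext l
      simp only [mem_sdiff, mem_union]
      exact ⟨fun ⟨h1, h2⟩ => h1.resolve_left fun h => h2 h.1,
        fun h => ⟨Or.inr h, mem_compl.1 (hUI h)⟩⟩
    simp only [Equiv.apply_symm_apply, this, hU]

noncomputable def orbitRep (e : OrbitIdx lam) : (Fin r → Fin 2) × (Fin r → Fin 2) :=
  (exists_pair_card_sdiff_eq hlam (Nat.lt_succ_iff.1 e.2)).choose

lemma orbitRep_spec (e : OrbitIdx lam) :
    wt r (orbitRep hlam e).1 = lam ∧ wt r (orbitRep hlam e).2 = lam
      ∧ #(ones (orbitRep hlam e).2 \ ones (orbitRep hlam e).1) = e :=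
  (exists_pair_card_sdiff_eq hlam (Nat.lt_succ_iff.1 e.2)).choose_spec

noncomputable def orbitCoeff (y : Module.End ℚ (TSpQ r)) (e : OrbitIdx lam) : ℚ :=
  mat y (orbitRep hlam e).1 (orbitRep hlam e).2

lemma mat_eq_orbitCoeff {x : Module.End ℚ (TSpQ r)} (hx : x ∈ heckeBimodule r lam lam)
    {i j : Fin r → Fin 2} (hi : wt r i = lam) (hj : wt r j = lam) :
    mat x i j = orbitCoeff hlam x ⟨_, Nat.lt_succ_of_le (card_sdiff_ones_le hi hj)⟩ := by
  obtain ⟨h1, h2, h3⟩ :=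
    orbitRep_spec hlam ⟨_, Nat.lt_succ_of_le (card_sdiff_ones_le hi hj)⟩
  exact mat_eq_of_card_sdiff_eq (mem_heckeBimodule_iff.1 hx).1 (hi.trans h1.symm)
    (hj.trans h2.symm) h3.symm

lemma eq_sum_orbitCoeff_smul_xi {x : Module.End ℚ (TSpQ r)} (hx : x ∈ heckeBimodule r lam lam) :
    x = ∑ e, orbitCoeff hlam x e • xi r lam e := by
  refine mat.injective (Matrix.ext fun i j => ?_)
  by_cases h : wt r i = lam ∧ wt r j = lam
  · rw [mat_sum_smul_xi_apply _ h.1 h.2, mat_eq_orbitCoeff hlam hx h.1 h.2]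
  · rw [mat_sum_smul_xi_apply_of_not _ h, mat_eq_zero_of_mem hx h]

lemma linearIndependent_xi : LinearIndependent ℚ (orbitBasis r lam) := by
  refine Fintype.linearIndependent_iff.2 fun c hc e => ?_
  obtain ⟨h1, h2, h3⟩ := orbitRep_spec hlam e
  have := congrArg (fun y => mat y (orbitRep hlam e).1 (orbitRep hlam e).2) hc
  rw [mat_sum_smul_xi_apply c h1 h2, map_zero, Matrix.zero_apply] at this
  rwa [← show (⟨_, _⟩ : OrbitIdx lam) = e from Fin.ext h3]

lemma exists_int_orbitCoeff {y : Module.End ℚ (TSpQ r)} (hy : y ∈ heckeLat r lam) :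
    ∃ n : OrbitIdx lam → ℤ,
      (∀ e, orbitCoeff hlam y e = n e) ∧ y = ∑ e, n e • xi r lam e := by
  choose n hn using fun e : OrbitIdx lam => mem_integralEnd_iff.1
    (mem_integralEnd_of_mem_heckeLat hy) (orbitRep hlam e).1 (orbitRep hlam e).2
  refine ⟨n, hn, ?_⟩
  conv_lhs => rw [eq_sum_orbitCoeff_smul_xi hlam (mem_heckeBimodule_of_mem_heckeLat hy)]
  exact sum_congr rfl fun e _ => by
    rw [orbitCoeff, hn]
    exact Int.cast_smul_eq_zsmul ℚ (n e) (xi r lam e)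

lemma heckeLat_le_span_xi :
    heckeLat r lam ≤ span ℤ (Set.range (orbitBasis r lam)) := by
  intro y hy
  obtain ⟨n, -, rfl⟩ := exists_int_orbitCoeff hlam hy
  exact Submodule.sum_mem _ fun e _ => smul_mem _ _ (subset_span ⟨e, rfl⟩)

lemma sub_xi_mem_span_Iio {y : Module.End ℚ (TSpQ r)} (hy : y ∈ heckeLat r lam)
    {a : OrbitIdx lam} (h1 : orbitCoeff hlam y a = 1)
    (h0 : ∀ e, a < e → orbitCoeff hlam y e = 0) :
    y - xi r lam a ∈ span ℤ (orbitBasis r lam '' Set.Iio a) := by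
  obtain ⟨n, hn, rfl⟩ := exists_int_orbitCoeff hlam hy
  have hna : n a = 1 := by exact_mod_cast (hn a).symm.trans h1
  have := sum_smul_sub_smul_mem_span_Iio (orbitBasis r lam) n
    fun e he => by exact_mod_cast (hn e).symm.trans (h0 e he)
  rwa [hna, one_smul] at this

lemma orbitCoeff_projFE {a e : OrbitIdx lam} (h : a ≤ e) :
    orbitCoeff hlam (projFE r lam a) e = if e = a then 1 else 0 := by
  obtain ⟨hi, hj, hd⟩ := orbitRep_spec hlam e
  rw [orbitCoeff, mat_projFE_apply hi hj (by rw [hd]; exact h), hd]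
  exact if_congr Fin.val_inj rfl rfl

lemma orbitCoeff_projEF {a e : OrbitIdx lam} (h : a ≤ e) :
    orbitCoeff hlam (projEF r lam a) e = if e = a then 1 else 0 := by
  obtain ⟨hi, hj, hd⟩ := orbitRep_spec hlam e
  rw [orbitCoeff, mat_projEF_apply hi hj (by rw [hd]; exact h), hd]
  exact if_congr Fin.val_inj rfl rfl

lemma projFE_sub_xi_mem_span_Iio (a : OrbitIdx lam) :
    projFE r lam a - xi r lam a ∈ span ℤ (orbitBasis r lam '' Set.Iio a) :=
  sub_xi_mem_span_Iio hlam (projFE_mem_heckeLat a)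
    (by rw [orbitCoeff_projFE hlam le_rfl, if_pos rfl])
    fun e he => by rw [orbitCoeff_projFE hlam he.le, if_neg he.ne']

lemma projEF_sub_xi_mem_span_Iio (a : OrbitIdx lam) :
    projEF r lam a - xi r lam a ∈ span ℤ (orbitBasis r lam '' Set.Iio a) :=
  sub_xi_mem_span_Iio hlam (projEF_mem_heckeLat a)
    (by rw [orbitCoeff_projEF hlam le_rfl, if_pos rfl])
    fun e he => by rw [orbitCoeff_projEF hlam he.le, if_neg he.ne']

lemma heckeLat_eq_span_xi :
    heckeLat r lam = span ℤ (Set.range (orbitBasis r lam)) := by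
  refine le_antisymm (heckeLat_le_span_xi hlam) ?_
  rw [← span_range_eq_of_sub_mem_span_Iio (projFE_sub_xi_mem_span_Iio hlam), span_le]
  rintro _ ⟨a, rfl⟩
  exact projFE_mem_heckeLat a

lemma exists_basis_heckeLat {v : OrbitIdx lam → Module.End ℚ (TSpQ r)}
    (hv : ∀ a, v a - xi r lam a ∈ span ℤ (orbitBasis r lam '' Set.Iio a)) :
    ∃ b : Module.Basis (OrbitIdx lam) ℤ (heckeLat r lam),
      ∀ a, (b a : Module.End ℚ (TSpQ r)) = v a := by
  have hspan := span_range_eq_of_sub_mem_span_Iio hv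
  have hspanℚ : span ℚ (Set.range v) = span ℚ (Set.range (orbitBasis r lam)) := by
    rw [← span_span_of_tower ℤ, hspan, span_span_of_tower]
  have hli : LinearIndependent ℚ v := linearIndependent_iff_card_eq_finrank_span.2 (by
    rw [Set.finrank, hspanℚ, finrank_span_eq_card (linearIndependent_xi hlam)])
  exact exists_basis_of_span_eq (hli.restrict_scalars' ℤ)
    (hspan.trans (heckeLat_eq_span_xi hlam).symm)

lemma xi_mem_heckeBimodule (e : OrbitIdx lam) : xi r lam e ∈ heckeBimodule r lam lam :=
  mem_heckeBimodule_of_mem_heckeLat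
    (by rw [heckeLat_eq_span_xi hlam]; exact subset_span ⟨e, rfl⟩)

lemma heckeBimodule_eq_span_xi :
    heckeBimodule r lam lam = span ℚ (Set.range (orbitBasis r lam)) := by
  refine le_antisymm (fun x hx => ?_) (span_le.2 ?_)
  · rw [eq_sum_orbitCoeff_smul_xi hlam hx]
    exact Submodule.sum_mem _ fun e _ => smul_mem _ _ (subset_span ⟨e, rfl⟩)
  · rintro _ ⟨e, rfl⟩
    exact xi_mem_heckeBimodule hlam e

lemma finrank_heckeBimodule :
    Module.finrank ℚ (heckeBimodule r lam lam) = 1 + min (lam 0) (lam 1) := by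
  rw [heckeBimodule_eq_span_xi hlam, finrank_span_eq_card (linearIndependent_xi hlam),
    Fintype.card_fin, add_comm]

lemma mat_xi_one_mul_xi_pos {d : ℕ} {i j : Fin r → Fin 2} (hi : wt r i = lam)
    (hj : wt r j = lam) (h : #(ones j \ ones i) = d + 1) :
    0 < mat (xi r lam 1 * xi r lam d) i j := by
  rw [map_mul, Matrix.mul_apply]
  obtain ⟨K, hK, hK1, hKd⟩ := exists_card_sdiff_eq_one (by rw [card_ones, card_ones, hi, hj]) h
  have hk : wt r (ones.symm K) = lam := by
    rw [wt_eq_iff hlam, Equiv.apply_symm_apply, hK, (wt_eq_iff hlam).1 hi]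
  refine sum_pos' (fun k _ => ?_) ⟨ones.symm K, mem_univ _, ?_⟩
  · rw [mat_xi_apply, mat_xi_apply]
    split_ifs <;> norm_num
  · rw [mat_xi_apply, mat_xi_apply, if_pos ⟨hi, hk, by rw [Equiv.apply_symm_apply, hK1]⟩,
      if_pos ⟨hk, hj, by rw [Equiv.apply_symm_apply, hKd]⟩]
    norm_num

lemma exists_xi_one_mul_xi_sub_smul_mem (a : OrbitIdx lam) {d : ℕ} (ha : (a : ℕ) = d + 1) :
    ∃ γ : ℚ, γ ≠ 0 ∧ xi r lam 1 * xi r lam d - γ • xi r lam a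
      ∈ span ℚ (orbitBasis r lam '' Set.Iio a) := by
  have hmem : xi r lam 1 * xi r lam d ∈ heckeBimodule r lam lam :=
    mul_mem_heckeBimodule (xi_mem_heckeBimodule hlam ⟨1, by omega⟩)
      (xi_mem_heckeBimodule hlam ⟨d, by omega⟩)
  refine ⟨orbitCoeff hlam (xi r lam 1 * xi r lam d) a, ?_, ?_⟩
  · obtain ⟨hi, hj, hd⟩ := orbitRep_spec hlam a
    exact (mat_xi_one_mul_xi_pos hlam hi hj (hd.trans ha)).ne'
  · have := sum_smul_sub_smul_mem_span_Iio (orbitBasis r lam)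
      (orbitCoeff hlam (xi r lam 1 * xi r lam d)) (a := a) fun e he => by
        obtain ⟨-, -, hd⟩ := orbitRep_spec hlam e
        exact mat_xi_one_mul_xi_eq_zero (by rw [hd, ← ha]; exact he)
    rwa [← eq_sum_orbitCoeff_smul_xi hlam hmem] at this

lemma xi_mem_span_pow {d : ℕ} (hd : d < min (lam 0) (lam 1) + 1) :
    xi r lam d ∈ span ℚ ({proj r lam} ∪
      Set.range fun k : ℕ => (proj r lam * (Fop r * Eop r) * proj r lam) ^ (k + 1)) := by
  set G := proj r lam * (Fop r * Eop r) * proj r lam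
  set W := span ℚ ({proj r lam} ∪ Set.range fun k : ℕ => G ^ (k + 1))
  have hG := projFE_one (r := r) (lam := lam) ▸ projFE_mem_heckeBimodule 1
  induction d using Nat.strong_induction_on with
  | _ d ih =>
  have hlow : span ℚ (orbitBasis r lam '' Set.Iio ⟨d, hd⟩) ≤ W :=
    span_le.2 (by rintro _ ⟨e, he, rfl⟩; exact ih e he e.2)
  -- `ξ₀` and `ξ₁` are obtained from `projFE 0 = 1_λ` and `projFE 1 = G` by unitriangularity
  have of_projFE (hv : projFE r lam d ∈ W) : xi r lam d ∈ W := by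
    rw [← sub_sub_cancel (projFE r lam d) (xi r lam d)]
    exact sub_mem hv (hlow (span_le_restrictScalars ℤ ℚ _
      (projFE_sub_xi_mem_span_Iio hlam ⟨d, hd⟩)))
  match d, ih, hd, hlow, of_projFE with
  | 0, _, _, _, of_projFE => exact of_projFE (projFE_zero ▸ subset_span (Or.inl rfl))
  | 1, _, _, _, of_projFE =>
    exact of_projFE (projFE_one ▸ subset_span (Or.inr ⟨0, pow_one G⟩))
  | d + 2, ih, hd, hlow, _ =>
    obtain ⟨γ, hγ, hmem⟩ :=
      exists_xi_one_mul_xi_sub_smul_mem hlam ⟨d + 2, hd⟩ (d := d + 1) rfl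
    have hprod := mul_mem_span_idempotent_pow proj_mul_proj (proj_mul_of_mem hG)
      (mul_proj_of_mem hG) (ih 1 (by omega) (by omega)) (ih (d + 1) (by omega) (by omega))
    have : xi r lam (d + 2) = γ⁻¹ • (xi r lam 1 * xi r lam (d + 1)
        - (xi r lam 1 * xi r lam (d + 1) - γ • xi r lam (d + 2))) := by
      rw [sub_sub_cancel, smul_smul, inv_mul_cancel₀ hγ, one_smul]
    rw [this]
    exact smul_mem _ _ (sub_mem hprod (hlow hmem))

lemma heckeBimodule_eq_span_pow :
    heckeBimodule r lam lam = span ℚ ({proj r lam} ∪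
      Set.range fun k : ℕ => (proj r lam * (Fop r * Eop r) * proj r lam) ^ (k + 1)) := by
  have hG := projFE_one (r := r) (lam := lam) ▸ projFE_mem_heckeBimodule 1
  have hpow (k : ℕ) : (proj r lam * (Fop r * Eop r) * proj r lam) ^ (k + 1)
      ∈ heckeBimodule r lam lam := by
    induction k with
    | zero => rwa [zero_add, pow_one]
    | succ k ih => rw [pow_succ]; exact mul_mem_heckeBimodule ih hG
  refine le_antisymm ?_ (span_le.2 ?_)
  · rw [heckeBimodule_eq_span_xi hlam, span_le]
    rintro _ ⟨e, rfl⟩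
    exact xi_mem_span_pow hlam e.2
  · rintro _ (h | ⟨k, rfl⟩)
    · rw [Set.mem_singleton_iff.1 h]
      exact proj_mem_heckeBimodule
    · exact hpow k

end OrbitBasis

variable (r)

theorem gl2_hecke_structure
    (lam : Fin 2 → ℕ) (hlam : lam 0 + lam 1 = r) :
    -- `ℤ`-basis `1_λ f^{(a)} e^{(a)} 1_λ`, `0 ≤ a ≤ min(λ₁,λ₂)`:
    (∃ b : Module.Basis (Fin (min (lam 0) (lam 1) + 1)) ℤ ↥(heckeLat r lam),
      ∀ a, (b a : Module.End ℚ (TSpQ r))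
        = proj r lam * (divPow r (Fop r) (a : ℕ) * divPow r (Eop r) (a : ℕ)) * proj r lam) ∧
    -- `ℤ`-basis `1_λ e^{(a)} f^{(a)} 1_λ`, `0 ≤ a ≤ min(λ₁,λ₂)`:
    (∃ b : Module.Basis (Fin (min (lam 0) (lam 1) + 1)) ℤ ↥(heckeLat r lam),
      ∀ a, (b a : Module.End ℚ (TSpQ r))
        = proj r lam * (divPow r (Eop r) (a : ℕ) * divPow r (Fop r) (a : ℕ)) * proj r lam) ∧
    -- `dim S(λ) = 1 + min(λ₁,λ₂)`:
    Module.finrank ℚ ↥(heckeBimodule r lam lam) = 1 + min (lam 0) (lam 1) ∧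
    -- `S(λ)` is commutative:
    (∀ x y : Module.End ℚ (TSpQ r),
      x ∈ heckeBimodule r lam lam → y ∈ heckeBimodule r lam lam → x * y = y * x) ∧
    -- `S(λ)` is generated (as a unital algebra, with unit `1_λ`) by `1_λ f e 1_λ`:
    heckeBimodule r lam lam
      = Submodule.span ℚ ({proj r lam} ∪
          Set.range fun k : ℕ => (proj r lam * (Fop r * Eop r) * proj r lam) ^ (k + 1)) :=
  ⟨exists_basis_heckeLat hlam (projFE_sub_xi_mem_span_Iio hlam),
    exists_basis_heckeLat hlam (projEF_sub_xi_mem_span_Iio hlam), finrank_heckeBimodule hlam,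
    fun _ _ => mul_comm_of_mem_heckeBimodule, heckeBimodule_eq_span_pow hlam⟩

end SchurPaper
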